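/- Non-colluding secrecy rate CDF: if R₁² is exponential with rate πλe, P, σℓ², σe², rℓ > 0, b ≥ 1, R_s = [log₂(1 + P/(rℓ^{2b}σℓ²)) − log₂(1 + P/(R₁^{2b}σe²))]⁺, and Rℓ = log₂(1 + P/(rℓ^{2b}σℓ²)), then for 0 ≤ ϱ < Rℓ: P(R_s ≤ ϱ) = 1 − exp(−πλe ((P/σe²)/((1 + P/(rℓ^{2b}σℓ²))2^{−ϱ} − 1))^{1/b}), while P(R_s ≤ ϱ) = 1 for ϱ ≥ Rℓ. -/

import Mathlib

/-!
With `X = R₁²`, `A = 1 + P/(rℓ^{2b}σℓ²)` and `c = P/σe²`, the secrecy rate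
`[log₂ A − log₂(1 + c X^{-b})]⁺` is nondecreasing in `X`. For `0 ≤ ϱ < log₂ A` the event
`R_s ≤ ϱ` is therefore `0 < X ≤ T` with `T = (c/(A 2^{-ϱ} − 1))^{1/b}`, of probability
`1 − exp(−πλe T)`; for `ϱ ≥ log₂ A` it contains `X > 0`, which has probability one.
-/

open MeasureTheory Real Set

section ExponentialDensity

variable {a : ℝ}

lemma integral_Ioi_exponentialDensity (ha : 0 < a) (c : ℝ) :
    ∫ x in Ioi c, a * exp (-(a * x)) = exp (-(a * c)) := by
  simp_rw [integral_const_mul, ← neg_mul, integral_exp_mul_Ioi (neg_lt_zero.2 ha)]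
  field_simp

lemma integrableOn_exponentialDensity (ha : 0 < a) (c : ℝ) :
    IntegrableOn (fun x => a * exp (-(a * x))) (Ioi c) := by
  simpa only [neg_mul, IntegrableOn] using (exp_neg_integrableOn_Ioi c ha).const_mul a

lemma integral_Ioc_exponentialDensity (ha : 0 < a) {T : ℝ} (hT : 0 ≤ T) :
    ∫ x in Ioc 0 T, a * exp (-(a * x)) = 1 - exp (-(a * T)) := by
  rw [← intervalIntegral.integral_of_le hT,
    ← intervalIntegral.integral_Ioi_sub_Ioi (integrableOn_exponentialDensity ha 0) hT,
    integral_Ioi_exponentialDensity ha, integral_Ioi_exponentialDensity ha, mul_zero, neg_zero,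
    exp_zero]

end ExponentialDensity

lemma sub_logb_one_add_le_iff {β A u ϱ : ℝ} (hβ : 1 < β) (hA : 0 < A) (hu : 0 ≤ u) :
    logb β A - logb β (1 + u) ≤ ϱ ↔ A * β ^ (-ϱ) ≤ 1 + u := by
  have hu1 : 0 < 1 + u := by linarith
  rw [← logb_div hA.ne' hu1.ne', logb_le_iff_le_rpow hβ (div_pos hA hu1), div_le_iff₀ hu1,
    rpow_neg (by linarith), ← div_eq_mul_inv, div_le_iff₀ (rpow_pos_of_pos (by linarith) ϱ),
    mul_comm]

lemma le_mul_rpow_neg_iff {x c D b : ℝ} (hx : 0 < x) (hc : 0 < c) (hD : 0 < D) (hb : 0 < b) :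
    D ≤ c * x ^ (-b) ↔ x ≤ (c / D) ^ (1 / b) := by
  rw [rpow_neg hx.le, ← div_eq_mul_inv, le_div_iff₀ (rpow_pos_of_pos hx b), one_div,
    le_rpow_inv_iff_of_pos hx.le (div_pos hc hD).le hb, le_div_iff₀ hD, mul_comm]

noncomputable def secrecyRate (A c b x : ℝ) : ℝ :=
  max 0 (logb 2 A - logb 2 (1 + c * x ^ (-b)))

lemma measurable_secrecyRate (A c b : ℝ) : Measurable (secrecyRate A c b) := by
  unfold secrecyRate logb
  fun_prop

lemma secrecyRate_le_iff {A c b x ϱ : ℝ} (hϱ : 0 ≤ ϱ) (hAϱ : 1 < A * 2 ^ (-ϱ)) (hc : 0 < c)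
    (hb : 0 < b) (hx : 0 < x) :
    secrecyRate A c b x ≤ ϱ ↔ x ≤ (c / (A * 2 ^ (-ϱ) - 1)) ^ (1 / b) := by
  have hA : 0 < A := pos_of_mul_pos_left (one_pos.trans hAϱ) (rpow_nonneg zero_le_two _)
  rw [secrecyRate, max_le_iff, and_iff_right hϱ,
    sub_logb_one_add_le_iff one_lt_two hA (by positivity), ← sub_le_iff_le_add',
    le_mul_rpow_neg_iff hx hc (by linarith) hb]

lemma secrecyRate_le_of_logb_le {A c b x ϱ : ℝ} (hA : 1 ≤ A) (hc : 0 ≤ c) (hx : 0 ≤ x)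
    (hϱ : logb 2 A ≤ ϱ) : secrecyRate A c b x ≤ ϱ := by
  have hlog : 0 ≤ logb 2 (1 + c * x ^ (-b)) :=
    logb_nonneg one_lt_two (by have := rpow_nonneg hx (-b); nlinarith)
  exact max_le ((logb_nonneg one_lt_two hA).trans hϱ) (by linarith)


def HasExponentialLaw {Ω : Type*} [MeasurableSpace Ω] (μ : Measure Ω) (X : Ω → ℝ) (a : ℝ) :
    Prop :=
  ∀ s : Set ℝ, MeasurableSet s →
    μ {ω | X ω ∈ s} = ENNReal.ofReal (∫ x in s ∩ Ioi 0, a * exp (-(a * x)))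

namespace HasExponentialLaw

variable {Ω : Type*} [MeasurableSpace Ω] {μ : Measure Ω} {X : Ω → ℝ} {a : ℝ} {s : Set ℝ}

lemma measure_mem_eq_of_inter_Ioi_eq_Ioc (hX : HasExponentialLaw μ X a) (ha : 0 < a)
    (hs : MeasurableSet s) {T : ℝ} (hT : 0 ≤ T) (hsT : s ∩ Ioi 0 = Ioc 0 T) :
    μ {ω | X ω ∈ s} = ENNReal.ofReal (1 - exp (-(a * T))) := by
  rw [hX s hs, hsT, integral_Ioc_exponentialDensity ha hT]

lemma measure_mem_eq_one_of_Ioi_subset (hX : HasExponentialLaw μ X a) (ha : 0 < a)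
    (hs : MeasurableSet s) (hsub : Ioi 0 ⊆ s) : μ {ω | X ω ∈ s} = 1 := by
  rw [hX s hs, inter_eq_right.2 hsub, integral_Ioi_exponentialDensity ha, mul_zero, neg_zero,
    exp_zero, ENNReal.ofReal_one]

end HasExponentialLaw

theorem stmt17_general {Ω : Type*} [MeasurableSpace Ω] (Prob : Measure Ω)
    (lamE Pw σl2 σe2 rl b : ℝ)
    (hlamE : 0 < lamE) (hP : 0 < Pw) (hσl : 0 < σl2) (hσe : 0 < σe2) (hrl : 0 < rl)
    (hb : 1 ≤ b)
    (X : Ω → ℝ)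
    (hX : ∀ s : Set ℝ, MeasurableSet s →
      Prob {ω | X ω ∈ s} = ENNReal.ofReal (∫ x in s ∩ Set.Ioi 0,
        Real.pi * lamE * Real.exp (-(Real.pi * lamE * x)))) :
    (∀ ϱ : ℝ, 0 ≤ ϱ → ϱ < Real.logb 2 (1 + Pw / (rl ^ (2 * b) * σl2)) →
      Prob {ω | max 0 (Real.logb 2 (1 + Pw / (rl ^ (2 * b) * σl2)) -
          Real.logb 2 (1 + (Pw / σe2) * X ω ^ (-b))) ≤ ϱ} =
        ENNReal.ofReal (1 - Real.exp (-(Real.pi * lamE *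
          ((Pw / σe2) /
            ((1 + Pw / (rl ^ (2 * b) * σl2)) * (2 : ℝ) ^ (-ϱ) - 1)) ^ (1 / b))))) ∧
    ∀ ϱ : ℝ, Real.logb 2 (1 + Pw / (rl ^ (2 * b) * σl2)) ≤ ϱ →
      Prob {ω | max 0 (Real.logb 2 (1 + Pw / (rl ^ (2 * b) * σl2)) -
          Real.logb 2 (1 + (Pw / σe2) * X ω ^ (-b))) ≤ ϱ} = 1 := by
  have hX : HasExponentialLaw Prob X (π * lamE) := hX
  have ha : 0 < π * lamE := mul_pos pi_pos hlamE
  set A := 1 + Pw / (rl ^ (2 * b) * σl2)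
  set c := Pw / σe2
  have hc : 0 < c := div_pos hP hσe
  have hA : 1 ≤ A := le_add_of_nonneg_right (by positivity)
  have hevent (ϱ : ℝ) : MeasurableSet {x | secrecyRate A c b x ≤ ϱ} :=
    measurable_secrecyRate A c b measurableSet_Iic
  refine ⟨fun ϱ hϱ0 hϱ => ?_, fun ϱ hϱ => ?_⟩
  · have hAϱ : 1 < A * 2 ^ (-ϱ) := by
      rw [lt_logb_iff_rpow_lt one_lt_two (by linarith)] at hϱ
      rwa [rpow_neg zero_le_two, ← div_eq_mul_inv, one_lt_div (rpow_pos_of_pos two_pos ϱ)]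
    refine hX.measure_mem_eq_of_inter_Ioi_eq_Ioc ha (hevent ϱ) (by positivity) ?_
    ext x
    rw [mem_inter_iff, mem_Ioc, mem_Ioi, and_comm]
    exact and_congr_right fun hx => secrecyRate_le_iff hϱ0 hAϱ hc (by linarith) hx
  · exact hX.measure_mem_eq_one_of_Ioi_subset ha (hevent ϱ)
      fun x hx => secrecyRate_le_of_logb_le hA hc.le (le_of_lt hx) hϱ

/-- Non-colluding secrecy-rate CDF: if `R₁²` is exponential with rate `πλe`,
`R_s = [log₂(1 + P/(rℓ^{2b}σℓ²)) − log₂(1 + P/(R₁^{2b}σe²))]⁺` and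
`Rℓ = log₂(1 + P/(rℓ^{2b}σℓ²))`, then for `0 ≤ ϱ < Rℓ`,
`P(R_s ≤ ϱ) = 1 − exp(−πλe ((P/σe²)/((1 + P/(rℓ^{2b}σℓ²))2^{−ϱ} − 1))^{1/b})`,
while `P(R_s ≤ ϱ) = 1` for `ϱ ≥ Rℓ`.  Here `X = R₁²`, so `R₁^{2b} = X^b`. -/
theorem stmt17 {Ω : Type*} [MeasurableSpace Ω] (Prob : Measure Ω) [IsProbabilityMeasure Prob]
    (lamE Pw σl2 σe2 rl b : ℝ)
    (hlamE : 0 < lamE) (hP : 0 < Pw) (hσl : 0 < σl2) (hσe : 0 < σe2) (hrl : 0 < rl)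
    (hb : 1 ≤ b)
    (X : Ω → ℝ) (hXmeas : Measurable X)
    (hX : ∀ s : Set ℝ, MeasurableSet s →
      Prob {ω | X ω ∈ s} = ENNReal.ofReal (∫ x in s ∩ Set.Ioi 0,
        Real.pi * lamE * Real.exp (-(Real.pi * lamE * x)))) :
    (∀ ϱ : ℝ, 0 ≤ ϱ → ϱ < Real.logb 2 (1 + Pw / (rl ^ (2 * b) * σl2)) →
      Prob {ω | max 0 (Real.logb 2 (1 + Pw / (rl ^ (2 * b) * σl2)) -
          Real.logb 2 (1 + (Pw / σe2) * X ω ^ (-b))) ≤ ϱ} =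
        ENNReal.ofReal (1 - Real.exp (-(Real.pi * lamE *
          ((Pw / σe2) /
            ((1 + Pw / (rl ^ (2 * b) * σl2)) * (2 : ℝ) ^ (-ϱ) - 1)) ^ (1 / b))))) ∧
    ∀ ϱ : ℝ, Real.logb 2 (1 + Pw / (rl ^ (2 * b) * σl2)) ≤ ϱ →
      Prob {ω | max 0 (Real.logb 2 (1 + Pw / (rl ^ (2 * b) * σl2)) -
          Real.logb 2 (1 + (Pw / σe2) * X ω ^ (-b))) ≤ ϱ} = 1 :=
  stmt17_general Prob lamE Pw σl2 σe2 rl b hlamE hP hσl hσe hrl hb X hX
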